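/- If ζ^μ and ξ^μ are smooth vector fields on ℝ^D with D⁺_μ ζ_ν = 0 and D⁺_μ ξ_ν = 0 for all μ,ν, then their Lie bracket η^μ := ζ^ν ∂_ν ξ^μ − ξ^ν ∂_ν ζ^μ also satisfies D⁺_μ η_ν = 0 for all μ,ν. The analogous statement holds with D⁻ in place of D⁺. -/

import Mathlib

noncomputable section

/-- Partial derivative of `f` at `x` in the `μ`-th coordinate direction. -/
def pd {D : ℕ} (μ : Fin D) (f : (Fin D → ℝ) → ℝ) (x : Fin D → ℝ) : ℝ :=
  fderiv ℝ f x (Pi.single μ 1)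

/-- A smooth real-valued function. -/
def Sm {D : ℕ} (f : (Fin D → ℝ) → ℝ) : Prop := ContDiff ℝ (⊤ : ℕ∞) f

/-- A smooth vector field on `ℝ^D`. -/
def SmoothVF {D : ℕ} (V : (Fin D → ℝ) → Fin D → ℝ) : Prop := ∀ μ, Sm fun x => V x μ

/-- A smooth field of 2-tensors on `ℝ^D`. -/
def Smooth2T {D : ℕ} (T : (Fin D → ℝ) → Fin D → Fin D → ℝ) : Prop :=
  ∀ μ ν, Sm fun x => T x μ ν

/-- The connection coefficients `Γ_{μν,ρ} = ½(∂_μG_{νρ} + ∂_νG_{μρ} − ∂_ρG_{μν})`. -/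
def Gam {D : ℕ} (G : (Fin D → ℝ) → Fin D → Fin D → ℝ) (μ ν ρ : Fin D) (x : Fin D → ℝ) : ℝ :=
  (pd μ (fun y => G y ν ρ) x + pd ν (fun y => G y μ ρ) x - pd ρ (fun y => G y μ ν) x) / 2

/-- The torsion `H_{μνρ} = ∂_μB_{νρ} + ∂_νB_{ρμ} + ∂_ρB_{μν}`. -/
def Htor {D : ℕ} (B : (Fin D → ℝ) → Fin D → Fin D → ℝ) (μ ν ρ : Fin D) (x : Fin D → ℝ) : ℝ :=
  pd μ (fun y => B y ν ρ) x + pd ν (fun y => B y ρ μ) x + pd ρ (fun y => B y μ ν) x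

/-- `Γ⁺_{μν,ρ} = Γ_{μν,ρ} + ½H_{μνρ}`. -/
def GamP {D : ℕ} (G B : (Fin D → ℝ) → Fin D → Fin D → ℝ) (μ ν ρ : Fin D) (x : Fin D → ℝ) : ℝ :=
  Gam G μ ν ρ x + Htor B μ ν ρ x / 2

/-- `Γ⁻_{μν,ρ} = Γ_{μν,ρ} − ½H_{μνρ}`. -/
def GamM {D : ℕ} (G B : (Fin D → ℝ) → Fin D → Fin D → ℝ) (μ ν ρ : Fin D) (x : Fin D → ℝ) : ℝ :=
  Gam G μ ν ρ x - Htor B μ ν ρ x / 2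

/-- The lowered components `V_μ = G_{μν}V^ν` of a vector field. -/
def lowerV {D : ℕ} (G : (Fin D → ℝ) → Fin D → Fin D → ℝ)
    (V : (Fin D → ℝ) → Fin D → ℝ) (μ : Fin D) (x : Fin D → ℝ) : ℝ :=
  ∑ ν, G x μ ν * V x ν

/-- The covariant derivative `D⁺_μV_ν = G_{νρ}∂_μV^ρ + Γ⁺_{μρ,ν}V^ρ`. -/
def Dp {D : ℕ} (G B : (Fin D → ℝ) → Fin D → Fin D → ℝ)
    (V : (Fin D → ℝ) → Fin D → ℝ) (μ ν : Fin D) (x : Fin D → ℝ) : ℝ :=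
  (∑ ρ, G x ν ρ * pd μ (fun y => V y ρ) x) + ∑ ρ, GamP G B μ ρ ν x * V x ρ

/-- The covariant derivative `D⁻_μV_ν = G_{νρ}∂_μV^ρ + Γ⁻_{μρ,ν}V^ρ`. -/
def Dm {D : ℕ} (G B : (Fin D → ℝ) → Fin D → Fin D → ℝ)
    (V : (Fin D → ℝ) → Fin D → ℝ) (μ ν : Fin D) (x : Fin D → ℝ) : ℝ :=
  (∑ ρ, G x ν ρ * pd μ (fun y => V y ρ) x) + ∑ ρ, GamM G B μ ρ ν x * V x ρ

/-- The Lie derivative of the metric: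
`(ℒ_ζG)_{μν} = ζ^ρ∂_ρG_{μν} + ∂_μζ^ρ·G_{ρν} + ∂_νζ^ρ·G_{μρ}`. -/
def lieG {D : ℕ} (G : (Fin D → ℝ) → Fin D → Fin D → ℝ)
    (ζ : (Fin D → ℝ) → Fin D → ℝ) (μ ν : Fin D) (x : Fin D → ℝ) : ℝ :=
  (∑ ρ, ζ x ρ * pd ρ (fun y => G y μ ν) x)
    + (∑ ρ, pd μ (fun y => ζ y ρ) x * G x ρ ν)
    + ∑ ρ, pd ν (fun y => ζ y ρ) x * G x μ ρ

/-- A Killing pair `(ζ, b)`: `D⁻_μζ_ν + D⁺_νζ_μ + ∂_μb_ν − ∂_νb_μ = 0`. -/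
def IsKillingPair {D : ℕ} (G B : (Fin D → ℝ) → Fin D → Fin D → ℝ)
    (ζ b : (Fin D → ℝ) → Fin D → ℝ) : Prop :=
  ∀ (μ ν : Fin D) (x : Fin D → ℝ),
    Dm G B ζ μ ν x + Dp G B ζ ν μ x
      + pd μ (fun y => b y ν) x - pd ν (fun y => b y μ) x = 0

/-!
Twice `D⁺_μ V_ν` splits into the symmetric part `(ℒ_V G)_{μν}` and the antisymmetric part
`(d V♭ − ι_V H)_{μν}`, so a field is `D⁺`-parallel exactly when it is Killing and
`d V♭ = ι_V H`. The bracket `η = [ζ, ξ]` of Killing fields is Killing because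
`ℒ_η = [ℒ_ζ, ℒ_ξ]`. Since `ζ` is Killing, `η♭ = ℒ_ζ ξ♭`, hence
`d η♭ = ℒ_ζ d ξ♭ = ℒ_ζ ι_ξ H = ι_η H + ι_ξ ℒ_ζ H`, and by Cartan's formula for the closed form
`H = dB` we get `ℒ_ζ H = d ι_ζ H = d d ζ♭ = 0`. No inverse of `G` is ever needed.
The operator `D⁻` is `D⁺` for the field `−B`.
-/

open scoped ContDiff

variable {D : ℕ}

section Calculus
variable {f g : (Fin D → ℝ) → ℝ} {x : Fin D → ℝ} {a b : Fin D}

@[fun_prop]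
theorem contDiff_pd (hf : ContDiff ℝ ∞ f) (a : Fin D) : ContDiff ℝ ∞ (fun y => pd a f y) :=
  (hf.fderiv_right (m := ∞) le_rfl).clm_apply contDiff_const

theorem pd_const (c : ℝ) : pd a (fun _ => c) x = 0 := by
  simp [pd]

theorem pd_neg : pd a (fun y => -f y) x = -pd a f x := by
  simp [pd, fderiv_fun_neg]

theorem pd_add (hf : ContDiff ℝ ∞ f) (hg : ContDiff ℝ ∞ g) :
    pd a (fun y => f y + g y) x = pd a f x + pd a g x := by
  simp [pd, fderiv_fun_add (hf.differentiable (by simp) x) (hg.differentiable (by simp) x)]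

theorem pd_sub (hf : ContDiff ℝ ∞ f) (hg : ContDiff ℝ ∞ g) :
    pd a (fun y => f y - g y) x = pd a f x - pd a g x := by
  simp [pd, fderiv_fun_sub (hf.differentiable (by simp) x) (hg.differentiable (by simp) x)]

theorem pd_mul (hf : ContDiff ℝ ∞ f) (hg : ContDiff ℝ ∞ g) :
    pd a (fun y => f y * g y) x = pd a f x * g x + f x * pd a g x := by
  simp [pd, fderiv_fun_mul (hf.differentiable (by simp) x) (hg.differentiable (by simp) x)]
  ring

theorem pd_sum {F : Fin D → (Fin D → ℝ) → ℝ} (hF : ∀ i, ContDiff ℝ ∞ (F i)) :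
    pd a (fun y => ∑ i, F i y) x = ∑ i, pd a (F i) x := by
  simp [pd, fderiv_fun_sum fun i _ => (hF i).differentiable (by simp) x]

def pd2 (a b : Fin D) (f : (Fin D → ℝ) → ℝ) (x : Fin D → ℝ) : ℝ :=
  fderiv ℝ (fderiv ℝ f) x (Pi.single a 1) (Pi.single b 1)

/-- The right-hand side is symmetric in `a, b` on the nose, so `ring` identifies mixed partials
taken in either order. -/
theorem pd_pd (hf : ContDiff ℝ ∞ f) :
    pd a (fun y => pd b f y) x = (pd2 a b f x + pd2 b a f x) / 2 := by
  have hsymm : IsSymmSndFDerivAt ℝ f x :=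
    hf.contDiffAt.isSymmSndFDerivAt <| by
      simpa [minSmoothness_of_isRCLikeNormedField] using
        WithTop.coe_le_coe.mpr (le_top : (2 : ℕ∞) ≤ ⊤)
  have hpd2 : pd a (fun y => pd b f y) x = pd2 a b f x := by
    unfold pd
    rw [fderiv_clm_apply ((hf.fderiv_right (m := ∞) le_rfl).differentiable (by simp) x)
      (differentiableAt_const _)]
    simp [pd2]
  rw [hpd2, pd2, pd2, hsymm]
  ring

end Calculus

theorem sum_sum_eq_of_add_swap {ι : Type*} [Fintype ι] {f g : ι → ι → ℝ}
    (h : ∀ i j, f i j + f j i = g i j + g j i) : ∑ i, ∑ j, f i j = ∑ i, ∑ j, g i j := by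
  have two_mul_eq (F : ι → ι → ℝ) : 2 * ∑ i, ∑ j, F i j = ∑ i, ∑ j, (F i j + F j i) := by
    rw [two_mul]
    nth_rw 2 [Finset.sum_comm]
    simp only [Finset.sum_add_distrib]
  have := two_mul_eq f
  simp only [h, ← two_mul_eq g] at this
  linarith

/-- Substituting `G = S + Sᵀ` builds the symmetry of `G` into the formulas, where `ring` sees it. -/
theorem exists_eq_add_transpose {G : (Fin D → ℝ) → Fin D → Fin D → ℝ} (hG : ContDiff ℝ ∞ G)
    (hsymm : ∀ x a b, G x a b = G x b a) :
    ∃ S : (Fin D → ℝ) → Fin D → Fin D → ℝ, ContDiff ℝ ∞ S ∧ G = fun x a b => S x a b + S x b a :=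
  ⟨fun x a b => G x a b / 2, by fun_prop, by funext x a b; simp only [hsymm x b a]; ring⟩

theorem exists_eq_sub_transpose {B : (Fin D → ℝ) → Fin D → Fin D → ℝ} (hB : ContDiff ℝ ∞ B)
    (hanti : ∀ x a b, B x a b = -B x b a) :
    ∃ A : (Fin D → ℝ) → Fin D → Fin D → ℝ, ContDiff ℝ ∞ A ∧ B = fun x a b => A x a b - A x b a :=
  ⟨fun x a b => B x a b / 2, by fun_prop, by funext x a b; simp only [hanti x b a]; ring⟩

theorem Smooth2T.contDiff {T : (Fin D → ℝ) → Fin D → Fin D → ℝ} (hT : Smooth2T T) :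
    ContDiff ℝ ∞ T :=
  contDiff_pi.2 fun μ => contDiff_pi.2 fun ν => hT μ ν

theorem SmoothVF.contDiff {V : (Fin D → ℝ) → Fin D → ℝ} (hV : SmoothVF V) : ContDiff ℝ ∞ V :=
  contDiff_pi.2 hV

/-! Vector fields, 1-forms and 2-tensor fields take the point first; 3-tensor fields take it
last, as `Htor` produces them. -/

def bracket (ζ ξ : (Fin D → ℝ) → Fin D → ℝ) : (Fin D → ℝ) → Fin D → ℝ :=
  fun y σ => (∑ ρ, ζ y ρ * pd ρ (fun z => ξ z σ) y) - ∑ ρ, ξ y ρ * pd ρ (fun z => ζ z σ) y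

def lie1 (ζ α : (Fin D → ℝ) → Fin D → ℝ) : (Fin D → ℝ) → Fin D → ℝ :=
  fun x ν => ∑ ρ, ζ x ρ * pd ρ (fun y => α y ν) x + ∑ ρ, pd ν (fun y => ζ y ρ) x * α x ρ

def lie2 (ζ : (Fin D → ℝ) → Fin D → ℝ) (T : (Fin D → ℝ) → Fin D → Fin D → ℝ) :
    (Fin D → ℝ) → Fin D → Fin D → ℝ :=
  fun x μ ν => lieG T ζ μ ν x

def lie3 (ζ : (Fin D → ℝ) → Fin D → ℝ) (K : Fin D → Fin D → Fin D → (Fin D → ℝ) → ℝ) :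
    Fin D → Fin D → Fin D → (Fin D → ℝ) → ℝ :=
  fun a b c x => ∑ ρ, ζ x ρ * pd ρ (fun y => K a b c y) x
    + ∑ ρ, pd a (fun y => ζ y ρ) x * K ρ b c x + ∑ ρ, pd b (fun y => ζ y ρ) x * K a ρ c x
    + ∑ ρ, pd c (fun y => ζ y ρ) x * K a b ρ x

def d1 (α : (Fin D → ℝ) → Fin D → ℝ) : (Fin D → ℝ) → Fin D → Fin D → ℝ :=
  fun x μ ν => pd μ (fun y => α y ν) x - pd ν (fun y => α y μ) x

def interiorProd (V : (Fin D → ℝ) → Fin D → ℝ) (K : Fin D → Fin D → Fin D → (Fin D → ℝ) → ℝ) :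
    (Fin D → ℝ) → Fin D → Fin D → ℝ :=
  fun x μ ν => ∑ ρ, V x ρ * K ρ μ ν x

section Identities
variable {ζ ξ : (Fin D → ℝ) → Fin D → ℝ} (x : Fin D → ℝ)

theorem lowerV_bracket {G : (Fin D → ℝ) → Fin D → Fin D → ℝ}
    (hG : ContDiff ℝ ∞ G) (hξ : ContDiff ℝ ∞ ξ) (ν : Fin D) :
    lowerV G (bracket ζ ξ) ν x
      = lie1 ζ (fun y ν => lowerV G ξ ν y) x ν - ∑ σ, lie2 ζ G x ν σ * ξ x σ := by
  simp (disch := first | fun_prop | intro; fun_prop) only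
    [lowerV, bracket, lie1, lie2, lieG, pd_sum, pd_mul]
  simp only [Finset.mul_sum, Finset.sum_mul, mul_sub, ← Finset.sum_add_distrib,
    ← Finset.sum_sub_distrib]
  exact sum_sum_eq_of_add_swap fun ρ σ => by ring

theorem d1_lie1 {α : (Fin D → ℝ) → Fin D → ℝ} (hζ : ContDiff ℝ ∞ ζ) (hα : ContDiff ℝ ∞ α)
    (μ ν : Fin D) : d1 (lie1 ζ α) x μ ν = lie2 ζ (d1 α) x μ ν := by
  simp (disch := first | fun_prop | intro; fun_prop) only
    [d1, lie1, lie2, lieG, pd_sum, pd_mul, pd_add, pd_sub, pd_pd]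
  simp only [mul_sub, ← Finset.sum_add_distrib, ← Finset.sum_sub_distrib]
  exact Finset.sum_congr rfl fun ρ _ => by ring

theorem lie2_bracket {T : (Fin D → ℝ) → Fin D → Fin D → ℝ} (hζ : ContDiff ℝ ∞ ζ)
    (hξ : ContDiff ℝ ∞ ξ) (hT : ContDiff ℝ ∞ T) (μ ν : Fin D) :
    lie2 (bracket ζ ξ) T x μ ν = lie2 ζ (lie2 ξ T) x μ ν - lie2 ξ (lie2 ζ T) x μ ν := by
  simp (disch := first | fun_prop | intro; fun_prop) only
    [lie2, lieG, bracket, pd_sum, pd_mul, pd_add, pd_sub, pd_pd]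
  simp only [Finset.mul_sum, Finset.sum_mul, mul_add, sub_mul, ← Finset.sum_add_distrib,
    ← Finset.sum_sub_distrib]
  exact sum_sum_eq_of_add_swap fun ρ σ => by ring

theorem lie2_interiorProd {K : Fin D → Fin D → Fin D → (Fin D → ℝ) → ℝ}
    (hξ : ContDiff ℝ ∞ ξ) (hK : ∀ a b c, ContDiff ℝ ∞ (K a b c)) (μ ν : Fin D) :
    lie2 ζ (interiorProd ξ K) x μ ν
      = interiorProd (bracket ζ ξ) K x μ ν + interiorProd ξ (lie3 ζ K) x μ ν := by
  simp (disch := first | fun_prop | intro; fun_prop) only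
    [lie2, lieG, lie3, interiorProd, bracket, pd_sum, pd_mul]
  simp only [Finset.mul_sum, Finset.sum_mul, mul_add, sub_mul, ← Finset.sum_add_distrib,
    ← Finset.sum_sub_distrib]
  exact sum_sum_eq_of_add_swap fun ρ σ => by ring

theorem Htor_d1 {α : (Fin D → ℝ) → Fin D → ℝ} (hα : ContDiff ℝ ∞ α) (a b c : Fin D) :
    Htor (d1 α) a b c x = 0 := by
  simp (disch := fun_prop) only [Htor, d1, pd_sub, pd_pd]
  ring

theorem lie3_Htor {B : (Fin D → ℝ) → Fin D → Fin D → ℝ} (hζ : ContDiff ℝ ∞ ζ)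
    (hB : ContDiff ℝ ∞ B) (hBanti : ∀ x a b, B x a b = -B x b a) (a b c : Fin D) :
    lie3 ζ (Htor B) a b c x = Htor (interiorProd ζ (Htor B)) a b c x := by
  obtain ⟨A, hA, rfl⟩ := exists_eq_sub_transpose hB hBanti
  simp (disch := first | fun_prop | intro; fun_prop) only
    [lie3, Htor, interiorProd, pd_sum, pd_mul, pd_add, pd_sub, pd_pd]
  simp only [mul_sub, mul_add, ← Finset.sum_add_distrib]
  exact Finset.sum_congr rfl fun ρ _ => by ring

end Identities

section Connection
variable {G B : (Fin D → ℝ) → Fin D → Fin D → ℝ} {V : (Fin D → ℝ) → Fin D → ℝ}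

theorem Dp_add_swap (hG : ContDiff ℝ ∞ G) (hGsym : ∀ x a b, G x a b = G x b a)
    (hB : ContDiff ℝ ∞ B) (hBanti : ∀ x a b, B x a b = -B x b a) (μ ν : Fin D)
    (x : Fin D → ℝ) : Dp G B V μ ν x + Dp G B V ν μ x = lie2 V G x μ ν := by
  obtain ⟨S, hS, rfl⟩ := exists_eq_add_transpose hG hGsym
  obtain ⟨A, hA, rfl⟩ := exists_eq_sub_transpose hB hBanti
  simp (disch := fun_prop) only [Dp, lie2, lieG, GamP, Gam, Htor, pd_add, pd_sub]
  simp only [← Finset.sum_add_distrib]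
  exact Finset.sum_congr rfl fun ρ _ => by ring

theorem Dp_sub_swap (hG : ContDiff ℝ ∞ G) (hGsym : ∀ x a b, G x a b = G x b a)
    (hB : ContDiff ℝ ∞ B) (hBanti : ∀ x a b, B x a b = -B x b a) (hV : ContDiff ℝ ∞ V)
    (μ ν : Fin D) (x : Fin D → ℝ) :
    Dp G B V μ ν x - Dp G B V ν μ x
      = d1 (fun y ν => lowerV G V ν y) x μ ν - interiorProd V (Htor B) x μ ν := by
  obtain ⟨S, hS, rfl⟩ := exists_eq_add_transpose hG hGsym
  obtain ⟨A, hA, rfl⟩ := exists_eq_sub_transpose hB hBanti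
  simp (disch := first | fun_prop | intro; fun_prop) only
    [Dp, d1, lowerV, interiorProd, GamP, Gam, Htor, pd_add, pd_sub, pd_sum, pd_mul]
  simp only [← Finset.sum_add_distrib, ← Finset.sum_sub_distrib]
  exact Finset.sum_congr rfl fun ρ _ => by ring

theorem Dm_eq_Dp_neg (μ ν : Fin D) (x : Fin D → ℝ) :
    Dm G B V μ ν x = Dp G (fun y a b => -B y a b) V μ ν x := by
  simp only [Dm, Dp, GamM, GamP, Htor, pd_neg]
  congr 1
  exact Finset.sum_congr rfl fun ρ _ => by ring

theorem Dp_bracket_eq_zero {ζ ξ : (Fin D → ℝ) → Fin D → ℝ}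
    (hG : ContDiff ℝ ∞ G) (hGsym : ∀ x a b, G x a b = G x b a)
    (hB : ContDiff ℝ ∞ B) (hBanti : ∀ x a b, B x a b = -B x b a)
    (hζ : ContDiff ℝ ∞ ζ) (hξ : ContDiff ℝ ∞ ξ)
    (hζ0 : ∀ μ ν x, Dp G B ζ μ ν x = 0) (hξ0 : ∀ μ ν x, Dp G B ξ μ ν x = 0)
    (μ ν : Fin D) (x : Fin D → ℝ) : Dp G B (bracket ζ ξ) μ ν x = 0 := by
  have killing {V} (h : ∀ μ ν x, Dp G B V μ ν x = 0) : lie2 V G = fun _ _ _ => 0 := by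
    funext x μ ν
    rw [← Dp_add_swap hG hGsym hB hBanti, h, h, add_zero]
  have closed {V} (hV : ContDiff ℝ ∞ V) (h : ∀ μ ν x, Dp G B V μ ν x = 0) :
      d1 (fun y ν => lowerV G V ν y) = interiorProd V (Htor B) := by
    funext x μ ν
    rw [← sub_eq_zero, ← Dp_sub_swap hG hGsym hB hBanti hV, h, h, sub_zero]
  have hflat :
      (fun y ν => lowerV G (bracket ζ ξ) ν y) = lie1 ζ (fun y ν => lowerV G ξ ν y) := by
    funext y ν
    simp [lowerV_bracket y hG hξ, killing hζ0]
  have hlie3 : lie3 ζ (Htor B) = fun _ _ _ _ => 0 := by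
    funext a b c y
    rw [lie3_Htor y hζ hB hBanti, ← closed hζ hζ0, Htor_d1 y (by unfold lowerV; fun_prop)]
  have hη_closed :
      d1 (fun y ν => lowerV G (bracket ζ ξ) ν y) = interiorProd (bracket ζ ξ) (Htor B) := by
    funext y μ ν
    rw [hflat, d1_lie1 y hζ (by unfold lowerV; fun_prop), closed hξ hξ0,
      lie2_interiorProd y hξ (fun a b c => by unfold Htor; fun_prop), hlie3]
    simp [interiorProd]
  have hη_killing : lie2 (bracket ζ ξ) G x μ ν = 0 := by
    rw [lie2_bracket x hζ hξ hG, killing hζ0, killing hξ0]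
    simp [lie2, lieG, pd_const]
  have hsym := Dp_add_swap (V := bracket ζ ξ) hG hGsym hB hBanti μ ν x
  have hanti := Dp_sub_swap (V := bracket ζ ξ) hG hGsym hB hBanti (by unfold bracket; fun_prop) μ ν x
  rw [hη_closed, sub_self] at hanti
  linarith

end Connection

theorem stmt11_general {D : ℕ}
    (G B : (Fin D → ℝ) → Fin D → Fin D → ℝ)
    (hGs : Smooth2T G) (hGsym : ∀ x μ ν, G x μ ν = G x ν μ)
    (hBs : Smooth2T B) (hBanti : ∀ x μ ν, B x μ ν = -B x ν μ)
    (ζ ξ : (Fin D → ℝ) → Fin D → ℝ) (hζ : SmoothVF ζ) (hξ : SmoothVF ξ) :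
    ((∀ μ ν x, Dp G B ζ μ ν x = 0) → (∀ μ ν x, Dp G B ξ μ ν x = 0) →
       ∀ μ ν x, Dp G B
         (fun y σ => (∑ ρ, ζ y ρ * pd ρ (fun z => ξ z σ) y)
           - ∑ ρ, ξ y ρ * pd ρ (fun z => ζ z σ) y) μ ν x = 0) ∧
    ((∀ μ ν x, Dm G B ζ μ ν x = 0) → (∀ μ ν x, Dm G B ξ μ ν x = 0) →
       ∀ μ ν x, Dm G B
         (fun y σ => (∑ ρ, ζ y ρ * pd ρ (fun z => ξ z σ) y)
           - ∑ ρ, ξ y ρ * pd ρ (fun z => ζ z σ) y) μ ν x = 0) := by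
  refine ⟨Dp_bracket_eq_zero hGs.contDiff hGsym hBs.contDiff hBanti hζ.contDiff hξ.contDiff,
    fun hζ0 hξ0 => ?_⟩
  simp only [Dm_eq_Dp_neg] at hζ0 hξ0 ⊢
  exact Dp_bracket_eq_zero hGs.contDiff hGsym (by have := hBs.contDiff; fun_prop)
    (fun y a b => neg_inj.2 (hBanti y a b)) hζ.contDiff hξ.contDiff hζ0 hξ0

/-- The Lie bracket of two covariantly constant vector fields of the same chirality is again
covariantly constant of that chirality. -/
theorem stmt11 {D : ℕ} (hD : 1 ≤ D)
    (G B : (Fin D → ℝ) → Fin D → Fin D → ℝ)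
    (hGs : Smooth2T G) (hGsym : ∀ x μ ν, G x μ ν = G x ν μ)
    (hBs : Smooth2T B) (hBanti : ∀ x μ ν, B x μ ν = -B x ν μ)
    (ζ ξ : (Fin D → ℝ) → Fin D → ℝ) (hζ : SmoothVF ζ) (hξ : SmoothVF ξ) :
    ((∀ μ ν x, Dp G B ζ μ ν x = 0) → (∀ μ ν x, Dp G B ξ μ ν x = 0) →
       ∀ μ ν x, Dp G B
         (fun y σ => (∑ ρ, ζ y ρ * pd ρ (fun z => ξ z σ) y)
           - ∑ ρ, ξ y ρ * pd ρ (fun z => ζ z σ) y) μ ν x = 0) ∧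
    ((∀ μ ν x, Dm G B ζ μ ν x = 0) → (∀ μ ν x, Dm G B ξ μ ν x = 0) →
       ∀ μ ν x, Dm G B
         (fun y σ => (∑ ρ, ζ y ρ * pd ρ (fun z => ξ z σ) y)
           - ∑ ρ, ξ y ρ * pd ρ (fun z => ζ z σ) y) μ ν x = 0) :=
  stmt11_general G B hGs hGsym hBs hBanti ζ ξ hζ hξ
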